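/- arXiv:2403.03669 — 2 statements merged into one kernel-verified Lean document; each statement's English description precedes it below -/
import Mathlib

section
/- Let μ_k = p·e^{-t·λ_k} where λ_k ≥ C·k^{2/m} for constants p, t, C > 0 and integer m ≥ 2. Then for all 0 < λ < 1/2, the effective dimension N(λ) = Σ_{k=1}^∞ μ_k/(λ + μ_k) satisfies N(λ) ≤ D·(log(1/λ))^{m/2} for some constant D depending only on p, t, C, m. -/
/-!
Split the series at `K ≈ (2 log(1/λ) / (tC))^{m/2}`. Each of the first `K` terms is at most `1`.
Beyond `K`, Weyl's law gives `t λ_k ≥ 2 log(1/λ)`, so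
`μ_k/(λ + μ_k) ≤ μ_k/λ ≤ p e^{-(tC/2) k^{2/m}}`, whose sum is a constant independent of `λ`.
Both contributions are `O((log(1/λ))^{m/2})` because `log(1/λ) ≥ log 2`.
-/

open Real

noncomputable def effectiveDimension (μ : ℕ → ℝ) (lam : ℝ) : ℝ :=
  ∑' k, μ k / (lam + μ k)

lemma summable_exp_neg_mul_rpow {b ε : ℝ} (hb : 0 < b) (hε : 0 < ε) :
    Summable fun k : ℕ => exp (-(b * (k : ℝ) ^ ε)) := by
  have hpow : Summable fun k : ℕ => ((k : ℝ) ^ ε) ^ (-2 / ε) := by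
    refine (summable_nat_rpow.2 (by norm_num : (-2 : ℝ) < -1)).congr fun k => ?_
    rw [← rpow_mul k.cast_nonneg, mul_div_cancel₀ _ hε.ne']
  refine summable_of_isBigO_nat hpow ?_
  have := (isLittleO_exp_neg_mul_rpow_atTop hb (-2 / ε)).comp_tendsto
    ((tendsto_rpow_atTop hε).comp tendsto_natCast_atTop_atTop)
  simpa only [Function.comp_def, neg_mul] using this.isBigO

lemma tsum_le_add_tsum_of_le_one_of_le_of_ge {f g : ℕ → ℝ} (K : ℕ) (hf₀ : ∀ k, 0 ≤ f k)
    (hf₁ : ∀ k, f k ≤ 1) (hfg : ∀ k, K ≤ k → f k ≤ g k) (hg₀ : ∀ k, 0 ≤ g k)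
    (hg : Summable g) : ∑' k, f k ≤ K + ∑' k, g k := by
  have hfgK : ∀ k, f (k + K) ≤ g (k + K) := fun k => hfg _ (Nat.le_add_left K k)
  have hgK : Summable fun k => g (k + K) := (summable_nat_add_iff K).2 hg
  have hfK : Summable fun k => f (k + K) := hgK.of_nonneg_of_le (fun k => hf₀ _) hfgK
  rw [← ((summable_nat_add_iff K).1 hfK).sum_add_tsum_nat_add K]
  gcongr ?_ + ?_
  · calc ∑ i ∈ Finset.range K, f i ≤ ∑ _i ∈ Finset.range K, (1 : ℝ) :=
          Finset.sum_le_sum fun i _ => hf₁ i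
      _ = K := by simp
  · calc ∑' k, f (k + K) ≤ ∑' k, g (k + K) := hfK.tsum_le_tsum hfgK hgK
      _ ≤ ∑' k, g k := tsum_comp_le_tsum_of_inj hg hg₀ (add_left_injective K)

lemma div_add_le_mul_exp_neg {lam μ p a x : ℝ} (hlam : 0 < lam) (hμ : 0 ≤ μ) (hp : 0 ≤ p)
    (hμle : μ ≤ p * exp (-(a * x))) (hx : 2 * log (1 / lam) ≤ a * x) :
    μ / (lam + μ) ≤ p * exp (-(a / 2 * x)) :=
  calc μ / (lam + μ) ≤ μ / lam := div_le_div_of_nonneg_left hμ hlam (by linarith)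
    _ ≤ p * exp (-(a * x)) / lam := by gcongr
    _ = p * exp (log (1 / lam) - a * x) := by
        rw [exp_sub, exp_log (by positivity), exp_neg]; field_simp
    _ ≤ p * exp (-(a / 2 * x)) := by gcongr; linarith

theorem effectiveDimension_le_of_le_exp_neg_rpow {μ : ℕ → ℝ} {p a ε lam : ℝ} (hp : 0 ≤ p)
    (ha : 0 < a) (hε : 0 < ε) (hlam : 0 < lam) (hlam₁ : lam ≤ 1) (hμ₀ : ∀ k, 0 ≤ μ k)
    (hμ : ∀ k, μ k ≤ p * exp (-(a * ((k : ℝ) + 1) ^ ε))) :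
    effectiveDimension μ lam ≤
      ⌈(2 * log (1 / lam) / a) ^ ε⁻¹⌉₊ + p * ∑' k : ℕ, exp (-(a / 2 * ((k : ℝ) + 1) ^ ε)) := by
  have hL : 0 ≤ log (1 / lam) := log_nonneg (by rw [le_div_iff₀ hlam]; linarith)
  rw [← tsum_mul_left]
  refine tsum_le_add_tsum_of_le_one_of_le_of_ge _
    (fun k => div_nonneg (hμ₀ k) (by linarith [hμ₀ k]))
    (fun k => div_le_one_of_le₀ (by linarith) (by linarith [hμ₀ k])) (fun k hk => ?_)
    (fun k => mul_nonneg hp (exp_pos _).le)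
    (((summable_nat_add_iff 1).2 (summable_exp_neg_mul_rpow (half_pos ha) hε)).mul_left p
      |>.congr fun k => by push_cast; rfl)
  refine div_add_le_mul_exp_neg hlam (hμ₀ k) hp (hμ k) ?_
  have hK : (2 * log (1 / lam) / a) ^ ε⁻¹ ≤ (k : ℝ) + 1 :=
    (Nat.le_ceil _).trans (by exact_mod_cast hk.trans k.le_succ)
  calc 2 * log (1 / lam) = a * ((2 * log (1 / lam) / a) ^ ε⁻¹) ^ ε := by
        rw [rpow_inv_rpow (by positivity) hε.ne']; field_simp
    _ ≤ a * ((k : ℝ) + 1) ^ ε := by gcongr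

/-- Effective-dimension bound: if `μ_k = p·e^{-t·λ_k}` with `λ_k ≥ C·k^{2/m}` (Weyl's law)
for `m ≥ 2`, then `N(λ) = Σ_{k≥1} μ_k/(λ+μ_k) ≤ D·(log(1/λ))^{m/2}` for all `0 < λ < 1/2`,
with `D` depending only on `p, t, C, m`. -/
theorem effective_dimension_bound (p t C : ℝ) (hp : 0 < p) (ht : 0 < t) (hC : 0 < C)
    (m : ℕ) (hm : 2 ≤ m) (lamSeq : ℕ → ℝ)
    (hweyl : ∀ k : ℕ, 1 ≤ k → C * (k : ℝ) ^ ((2 : ℝ) / m) ≤ lamSeq k) :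
    ∃ D : ℝ, 0 < D ∧ ∀ lam : ℝ, 0 < lam → lam < 1 / 2 →
      (∑' k : ℕ, p * Real.exp (-t * lamSeq (k + 1)) /
          (lam + p * Real.exp (-t * lamSeq (k + 1))))
        ≤ D * (Real.log (1 / lam)) ^ ((m : ℝ) / 2) := by
  have hm₀ : (0 : ℝ) < m := by exact_mod_cast (by omega : 0 < m)
  set a := t * C
  set S := ∑' k : ℕ, exp (-(a / 2 * ((k : ℝ) + 1) ^ ((2 : ℝ) / m)))
  refine ⟨(2 / a) ^ ((m : ℝ) / 2) + (1 + p * S) / log 2 ^ ((m : ℝ) / 2), by positivity,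
    fun lam hlam hlam₂ => ?_⟩
  have hL : log 2 ≤ log (1 / lam) := log_le_log (by norm_num) (by rw [le_div_iff₀ hlam]; linarith)
  have hL₀ : 0 ≤ log (1 / lam) := (log_nonneg one_le_two).trans hL
  have hdecay : ∀ k : ℕ, p * exp (-t * lamSeq (k + 1)) ≤
      p * exp (-(a * ((k : ℝ) + 1) ^ ((2 : ℝ) / m))) := fun k => by
    have := hweyl (k + 1) (by omega)
    push_cast at this
    gcongr
    nlinarith
  have hS_le :
      1 + p * S ≤ (1 + p * S) / log 2 ^ ((m : ℝ) / 2) * log (1 / lam) ^ ((m : ℝ) / 2) := by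
    rw [div_mul_eq_mul_div, le_div_iff₀ (by positivity)]
    gcongr
  calc _ ≤ _ := effectiveDimension_le_of_le_exp_neg_rpow hp.le (by positivity) (by positivity)
        hlam (by linarith) (fun k => by positivity) hdecay
    _ ≤ (2 / a) ^ ((m : ℝ) / 2) * log (1 / lam) ^ ((m : ℝ) / 2) + (1 + p * S) := by
        rw [inv_div, mul_div_right_comm, mul_rpow (by positivity) hL₀]
        linarith [Nat.ceil_lt_add_one (by positivity :
          0 ≤ (2 / a) ^ ((m : ℝ) / 2) * log (1 / lam) ^ ((m : ℝ) / 2))]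
    _ ≤ _ := by rw [add_mul]; linarith
end

section
/- Let g_λ be a filter with 0 < g_λ(μ) ≤ λ⁻¹ and μ·g_λ(μ) ≤ 1 for all 0 < μ ≤ κ². Then for 0 < β ≤ 1 and any (a_k) ∈ ℓ² with Σ μ_k^{-β} a_k² = R² < ∞ and eigenvalues 0 < μ_k ≤ κ², one has Σ_k (g_λ(μ_k)·μ_k^{1/2}·a_k)² ≤ λ^{β-1}·R². -/
/-- Abstract bound `‖f_{P,λ}‖²_H ≤ λ^{β-1}·R²`: for a filter with `0 < g_λ(μ) ≤ λ⁻¹`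
and `μ·g_λ(μ) ≤ 1` on `(0, κ²]`, eigenvalues `0 < μ_k ≤ κ²`, `0 < β ≤ 1`, and
coefficients with `Σ μ_k^{-β} a_k² = R² < ∞`, one has
`Σ (g_λ(μ_k)·μ_k^{1/2}·a_k)² ≤ λ^{β-1}·R²`. -/
theorem continuous_estimator_norm_bound
    (g : ℝ → ℝ) (κ lam β R : ℝ) (hκ : 1 ≤ κ) (hlam : 0 < lam)
    (hβ0 : 0 < β) (hβ1 : β ≤ 1)
    (hg : ∀ μ : ℝ, 0 < μ → μ ≤ κ ^ 2 → 0 < g μ ∧ g μ ≤ lam⁻¹ ∧ μ * g μ ≤ 1)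
    (μ : ℕ → ℝ) (hμpos : ∀ k, 0 < μ k) (hμle : ∀ k, μ k ≤ κ ^ 2)
    (a : ℕ → ℝ) (hsumm : Summable fun k => μ k ^ (-β) * (a k) ^ 2)
    (hR : (∑' k : ℕ, μ k ^ (-β) * (a k) ^ 2) = R ^ 2) :
    (∑' k : ℕ, (g (μ k) * μ k ^ ((1 : ℝ) / 2) * a k) ^ 2) ≤ lam ^ (β - 1) * R ^ 2 := by
  have hb : ∀ k, (g (μ k) * μ k ^ ((1 : ℝ) / 2) * a k) ^ 2
      ≤ lam ^ (β - 1) * (μ k ^ (-β) * a k ^ 2) := by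
    intro k
    obtain ⟨hg0, hgl, hmg⟩ := hg (μ k) (hμpos k) (hμle k)
    set m := μ k with hmdef
    have hm : 0 < m := hμpos k
    have h1 : (g m * m ^ ((1 : ℝ) / 2) * a k) ^ 2 = (g m ^ 2 * m) * a k ^ 2 := by
      have : (m ^ ((1 : ℝ) / 2)) ^ 2 = m := by
        rw [← Real.rpow_natCast (m ^ ((1:ℝ)/2)) 2, ← Real.rpow_mul hm.le]
        norm_num
      rw [mul_pow, mul_pow, this]
    rw [h1]
    have hid : g m ^ 2 * m = g m ^ ((1:ℝ) - β) * (g m * m) ^ ((1:ℝ) + β) * m ^ (-β) := by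
      rw [Real.mul_rpow hg0.le hm.le]
      rw [show g m ^ ((1:ℝ)-β) * (g m ^ ((1:ℝ)+β) * m ^ ((1:ℝ)+β)) * m ^ (-β)
          = (g m ^ ((1:ℝ)-β) * g m ^ ((1:ℝ)+β)) * (m ^ ((1:ℝ)+β) * m ^ (-β)) by ring]
      rw [← Real.rpow_add hg0, ← Real.rpow_add hm]
      norm_num
    have hbound : g m ^ 2 * m ≤ lam ^ (β - 1) * m ^ (-β) := by
      rw [hid]
      have h2 : g m ^ ((1:ℝ) - β) ≤ lam ^ (β - 1) := by
        have : g m ^ ((1:ℝ) - β) ≤ (lam⁻¹) ^ ((1:ℝ) - β) :=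
          Real.rpow_le_rpow hg0.le hgl (by linarith)
        calc g m ^ ((1:ℝ) - β) ≤ (lam⁻¹) ^ ((1:ℝ) - β) := this
          _ = lam ^ (β - 1) := by
            rw [Real.inv_rpow hlam.le, ← Real.rpow_neg hlam.le]
            ring_nf
      have h3 : (g m * m) ^ ((1:ℝ) + β) ≤ 1 :=
        Real.rpow_le_one (by positivity) (by rw [mul_comm]; exact hmg) (by linarith)
      have hmneg : (0:ℝ) ≤ m ^ (-β) := Real.rpow_nonneg hm.le _
      calc g m ^ ((1:ℝ) - β) * (g m * m) ^ ((1:ℝ) + β) * m ^ (-β)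
          ≤ lam ^ (β - 1) * 1 * m ^ (-β) := by
            apply mul_le_mul_of_nonneg_right _ hmneg
            exact mul_le_mul h2 h3 (by positivity) (Real.rpow_nonneg hlam.le _)
        _ = lam ^ (β - 1) * m ^ (-β) := by ring
    calc g m ^ 2 * m * a k ^ 2 ≤ (lam ^ (β - 1) * m ^ (-β)) * a k ^ 2 :=
          mul_le_mul_of_nonneg_right hbound (sq_nonneg _)
      _ = lam ^ (β - 1) * (m ^ (-β) * a k ^ 2) := by ring
  have hsum2 : Summable fun k => lam ^ (β - 1) * (μ k ^ (-β) * a k ^ 2) :=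
    hsumm.mul_left _
  calc (∑' k : ℕ, (g (μ k) * μ k ^ ((1 : ℝ) / 2) * a k) ^ 2)
      ≤ ∑' k : ℕ, lam ^ (β - 1) * (μ k ^ (-β) * a k ^ 2) :=
        Summable.tsum_le_tsum hb (Summable.of_nonneg_of_le (fun k => sq_nonneg _) hb hsum2) hsum2
    _ = lam ^ (β - 1) * R ^ 2 := by rw [tsum_mul_left, hR]
end
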